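/- The distance matrix of the corona graph G⊙H admits the block decomposition D_{G⊙H} = D_G ⊗ [[J,J],[J,J]] + I_G ⊗ [[0,0],[0, −2I − A_H]] + J_G ⊗ [[0,J],[J,2J]], where the second tensor factor is partitioned according to {o} ∪ V₂. -/

import Mathlib

open Matrix BigOperators

/-!
The paper's formula, read as a function on pairs of vertices of `G ⊙ H`, vanishes on the diagonal
and changes by at most one along each edge, so it bounds the length of every walk from below.
It is attained by walks that go from `(x, i)` to the base vertex `(x, o)` inside the copy of
`H̃ = K₁ + H`, follow a geodesic of `G` along the base vertices, and climb up to `(y, j)`. The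
decomposition then amounts to the distances in `H̃`, which are `0`, `1` or `2` according as two
vertices are equal, adjacent or neither.
-/

/-- The join `K₁ + H` of a single vertex (labelled `none`) with `H`. -/
def joinOne {V₂ : Type*} (H : SimpleGraph V₂) : SimpleGraph (Option V₂) where
  Adj i j := (∃ a b, i = some a ∧ j = some b ∧ H.Adj a b) ∨
    (i = none ∧ j ≠ none) ∨ (i ≠ none ∧ j = none)
  symm := by
    constructor
    rintro i j (⟨a, b, ha, hb, hab⟩ | ⟨h1, h2⟩ | ⟨h1, h2⟩)
    · exact Or.inl ⟨b, a, hb, ha, hab.symm⟩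
    · exact Or.inr (Or.inr ⟨h2, h1⟩)
    · exact Or.inr (Or.inl ⟨h2, h1⟩)
  loopless := by
    constructor
    rintro i (⟨a, b, ha, hb, hab⟩ | ⟨h1, h2⟩ | ⟨h1, h2⟩)
    · rw [ha] at hb; injection hb with h; subst h; exact H.irrefl hab
    · exact h2 h1
    · exact h1 h2

/-- The corona graph `G ⊙ H`, on vertex set `V₁ × ({o} ∪ V₂)` with `o = none`. -/
def corona {V₁ V₂ : Type*} (G : SimpleGraph V₁) (H : SimpleGraph V₂) :
    SimpleGraph (V₁ × Option V₂) where
  Adj p q := (p.2 = none ∧ q.2 = none ∧ G.Adj p.1 q.1) ∨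
    (p.1 = q.1 ∧ (joinOne H).Adj p.2 q.2)
  symm := by
    constructor
    rintro p q (⟨h1, h2, h3⟩ | ⟨h1, h2⟩)
    · exact Or.inl ⟨h2, h1, h3.symm⟩
    · exact Or.inr ⟨h1.symm, (joinOne H).adj_symm h2⟩
  loopless := by
    constructor
    rintro p (⟨_, _, h⟩ | ⟨_, h⟩)
    · exact G.irrefl h
    · exact (joinOne H).irrefl h

/-- The distance matrix of a graph, with real entries. -/
noncomputable def distMatrix {V : Type*} (G : SimpleGraph V) : Matrix V V ℝ :=
  fun x y => (G.dist x y : ℝ)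

/-- Middle block of the decomposition, `[[0,0],[0, −2I − A_H]]`, indexed by `{o} ∪ V₂`. -/
noncomputable def blockB {V₂ : Type*} [DecidableEq V₂] (H : SimpleGraph V₂)
    [DecidableRel H.Adj] : Option V₂ → Option V₂ → ℝ
  | some a, some b => -2 * (if a = b then 1 else 0) - (H.adjMatrix ℝ) a b
  | _, _ => 0

/-- Last block of the decomposition, `[[0,J],[J,2J]]`, indexed by `{o} ∪ V₂`. -/
def blockC {V₂ : Type*} : Option V₂ → Option V₂ → ℝ
  | none, none => 0
  | none, some _ => 1
  | some _, none => 1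
  | some _, some _ => 2

namespace SimpleGraph

variable {V : Type*} {G : SimpleGraph V}

theorem Walk.le_length_of_le_add_one_of_adj (f : V → V → ℕ) (hf₀ : ∀ v, f v v = 0)
    (hf : ∀ {u v} w, G.Adj u v → f u w ≤ f v w + 1) {u v : V} (W : G.Walk u v) :
    f u v ≤ W.length := by
  induction W with
  | nil => simp [hf₀]
  | cons h W ih => exact (hf _ h).trans (by simpa using ih)

theorem dist_eq_of_le_add_one_of_adj (f : V → V → ℕ) (hf₀ : ∀ v, f v v = 0)
    (hf : ∀ {u v} w, G.Adj u v → f u w ≤ f v w + 1)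
    (hW : ∀ u v, ∃ W : G.Walk u v, W.length = f u v) (u v : V) :
    G.dist u v = f u v := by
  obtain ⟨W, hW⟩ := hW u v
  refine le_antisymm (hW ▸ dist_le W) ?_
  obtain ⟨P, hP⟩ := Reachable.exists_walk_length_eq_dist ⟨W⟩
  exact hP ▸ P.le_length_of_le_add_one_of_adj f hf₀ hf

theorem Adj.dist_le_dist_add_one {u v : V} (h : G.Adj u v) (w : V) :
    G.dist u w ≤ G.dist v w + 1 := by
  have := h.reachable.dist_triangle_left w
  rw [dist_eq_one_iff_adj.mpr h] at this
  omega

end SimpleGraph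

open SimpleGraph

section JoinOne

variable {V₂ : Type*} (H : SimpleGraph V₂)

@[simp]
theorem joinOne_adj_none_some (b : V₂) : (joinOne H).Adj none (some b) :=
  Or.inr (Or.inl ⟨rfl, Option.some_ne_none b⟩)

@[simp]
theorem joinOne_adj_some_some {a b : V₂} : (joinOne H).Adj (some a) (some b) ↔ H.Adj a b := by
  simp [joinOne]

theorem joinOne_connected : (joinOne H).Connected := by
  have hnone : ∀ j, (joinOne H).Reachable none j
    | none => .rfl
    | some b => (joinOne_adj_none_some H b).reachable
  exact ⟨fun i j => (hnone i).symm.trans (hnone j)⟩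

theorem joinOne_dist_none_some (b : V₂) : (joinOne H).dist none (some b) = 1 :=
  dist_eq_one_iff_adj.mpr (joinOne_adj_none_some H b)

theorem joinOne_dist_some_some_of_not_adj {a b : V₂} (hab : a ≠ b) (h : ¬ H.Adj a b) :
    (joinOne H).dist (some a) (some b) = 2 := by
  have hle : (joinOne H).dist (some a) (some b) ≤ 2 :=
    dist_le (.cons (joinOne_adj_none_some H a).symm (.cons (joinOne_adj_none_some H b) .nil))
  have hne0 : (joinOne H).dist (some a) (some b) ≠ 0 := by
    simp [((joinOne_connected H).preconnected _ _).dist_eq_zero_iff, hab]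
  have hne1 : (joinOne H).dist (some a) (some b) ≠ 1 := by simpa using h
  omega

theorem blockC_eq_joinOne_dist (i j : Option V₂) :
    blockC i j = ((joinOne H).dist i none + (joinOne H).dist none j : ℕ) := by
  cases i <;> cases j <;> simp [blockC, dist_comm (u := some _), joinOne_dist_none_some]

theorem joinOne_dist_eq_blockB_add_blockC [DecidableEq V₂] [DecidableRel H.Adj]
    (i j : Option V₂) : ((joinOne H).dist i j : ℝ) = blockB H i j + blockC i j := by
  rcases i with _ | a <;> rcases j with _ | b
  · simp [blockB, blockC]
  · simp [blockB, blockC, joinOne_dist_none_some]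
  · simp [blockB, blockC, dist_comm (u := some a), joinOne_dist_none_some]
  · by_cases hab : a = b
    · subst hab; simp [blockB, blockC]
    by_cases hadj : H.Adj a b
    · norm_num [blockB, blockC, hab, hadj, dist_eq_one_iff_adj.mpr]
    · simp [blockB, blockC, hab, hadj, joinOne_dist_some_some_of_not_adj H hab hadj]

end JoinOne

section Corona

variable {V₁ V₂ : Type*} (G : SimpleGraph V₁) (H : SimpleGraph V₂)

def copyHom (x : V₁) : joinOne H →g corona G H where
  toFun i := (x, i)
  map_rel' h := Or.inr ⟨rfl, h⟩

def baseHom : G →g corona G H where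
  toFun x := (x, none)
  map_rel' h := Or.inl ⟨rfl, rfl, h⟩

noncomputable def coronaDist [DecidableEq V₁] (p q : V₁ × Option V₂) : ℕ :=
  if p.1 = q.1 then (joinOne H).dist p.2 q.2
  else (joinOne H).dist p.2 none + G.dist p.1 q.1 + (joinOne H).dist none q.2

variable {G H}

theorem exists_walk_copy_length_eq (x : V₁) (i j : Option V₂) :
    ∃ W : (corona G H).Walk (x, i) (x, j), W.length = (joinOne H).dist i j := by
  obtain ⟨P, hP⟩ := (joinOne_connected H).exists_walk_length_eq_dist i j
  exact ⟨P.map (copyHom G H x), (P.length_map _).trans hP⟩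

theorem exists_walk_base_length_eq (hG : G.Connected) (x y : V₁) :
    ∃ W : (corona G H).Walk (x, none) (y, none), W.length = G.dist x y := by
  obtain ⟨P, hP⟩ := hG.exists_walk_length_eq_dist x y
  exact ⟨P.map (baseHom G H), (P.length_map _).trans hP⟩

variable [DecidableEq V₁]

theorem coronaDist_none_left (x y : V₁) (j : Option V₂) :
    coronaDist G H (x, none) (y, j) = G.dist x y + (joinOne H).dist none j := by
  by_cases hxy : x = y <;> simp [coronaDist, hxy]

theorem coronaDist_le_add_one_of_adj {p q : V₁ × Option V₂} (r : V₁ × Option V₂)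
    (h : (corona G H).Adj p q) : coronaDist G H p r ≤ coronaDist G H q r + 1 := by
  obtain ⟨x, i⟩ := p; obtain ⟨z, k⟩ := q; obtain ⟨y, j⟩ := r
  rcases h with ⟨hi, hk, hxz⟩ | ⟨hxz, hik⟩ <;> dsimp only at *
  · subst hi hk
    simp only [coronaDist_none_left]
    have := hxz.dist_le_dist_add_one y
    omega
  · subst hxz
    simp only [coronaDist]
    split_ifs
    · exact hik.dist_le_dist_add_one j
    · have := hik.dist_le_dist_add_one none
      omega

theorem exists_walk_length_eq_coronaDist (hG : G.Connected) (p q : V₁ × Option V₂) :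
    ∃ W : (corona G H).Walk p q, W.length = coronaDist G H p q := by
  obtain ⟨x, i⟩ := p; obtain ⟨y, j⟩ := q
  by_cases hxy : x = y
  · subst hxy
    simpa [coronaDist] using exists_walk_copy_length_eq x i j
  · obtain ⟨W₁, hW₁⟩ := exists_walk_copy_length_eq (G := G) x i none
    obtain ⟨W₂, hW₂⟩ := exists_walk_base_length_eq (H := H) hG x y
    obtain ⟨W₃, hW₃⟩ := exists_walk_copy_length_eq (G := G) y none j
    refine ⟨W₁.append (W₂.append W₃), ?_⟩
    simp [coronaDist, hxy, hW₁, hW₂, hW₃, add_assoc]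

theorem corona_dist_eq_coronaDist (hG : G.Connected) (p q : V₁ × Option V₂) :
    (corona G H).dist p q = coronaDist G H p q :=
  dist_eq_of_le_add_one_of_adj _ (fun _ => by simp [coronaDist]) coronaDist_le_add_one_of_adj
    (exists_walk_length_eq_coronaDist hG) p q

end Corona

theorem corona_distMatrix_decomposition_general {V₁ V₂ : Type*}
    [DecidableEq V₁] [DecidableEq V₂]
    (G : SimpleGraph V₁) (H : SimpleGraph V₂) [DecidableRel H.Adj] (hG : G.Connected)
    (x y : V₁) (i j : Option V₂) :
    distMatrix (corona G H) (x, i) (y, j) =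
      distMatrix G x y * 1 + (if x = y then blockB H i j else 0) + 1 * blockC i j := by
  rw [distMatrix, distMatrix, corona_dist_eq_coronaDist hG, coronaDist]
  by_cases hxy : x = y
  · subst hxy
    simp [joinOne_dist_eq_blockB_add_blockC]
  · simp only [hxy, if_false, blockC_eq_joinOne_dist H]
    push_cast
    ring

/-- The distance matrix of the corona graph `G ⊙ H` admits the block
decomposition
`D_{G⊙H} = D_G ⊗ [[J,J],[J,J]] + I_G ⊗ [[0,0],[0,−2I−A_H]] + J_G ⊗ [[0,J],[J,2J]]`,
stated entrywise. -/
theorem corona_distMatrix_decomposition {V₁ V₂ : Type*} [Fintype V₁] [Fintype V₂]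
    [DecidableEq V₁] [DecidableEq V₂]
    (G : SimpleGraph V₁) (H : SimpleGraph V₂) [DecidableRel H.Adj] (hG : G.Connected)
    (x y : V₁) (i j : Option V₂) :
    distMatrix (corona G H) (x, i) (y, j) =
      distMatrix G x y * 1 + (if x = y then blockB H i j else 0) + 1 * blockC i j :=
  corona_distMatrix_decomposition_general G H hG x y i j
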